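/- Let T̂ ∈ Ĝ and λ ∈ ℂ satisfy T̂(e,0) = λ·(e,0). Then λ ≠ 0, and setting μ = 1/conj(λ), there exist a unitary operator U of the orthogonal complement (ℂ·e)^⊥ in H, a' ∈ H orthogonal to e, and s ∈ ℂ with Re s = (1/2)‖a'‖², such that T̂(x,z) = ((λ·⟨x,e⟩ + ⟨x', U⁻¹(a')⟩ + μ·s·z)·e + U(x') + μ·z·a', μ·z) for all (x,z) ∈ H ⊕ ℂ. -/

import Mathlib

noncomputable section

variable {H : Type*} [NormedAddCommGroup H] [InnerProductSpace ℂ H] [CompleteSpace H]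

/-- The Hermitian form `Â((x,z),(y,w)) = -z·conj⟨y,e⟩ - ⟨x,e⟩·conj w + ⟨x',y'⟩`
(paper convention: linear in the first argument, with `⟨a,b⟩ = inner b a` in Mathlib,
and `x' = x - ⟨x,e⟩e`). -/
def hatA (e : H) (u v : H × ℂ) : ℂ :=
  - u.2 * (inner ℂ v.1 e : ℂ) - (inner ℂ e u.1 : ℂ) * (starRingEnd ℂ) v.2
    + (inner ℂ (v.1 - (inner ℂ e v.1 : ℂ) • e) (u.1 - (inner ℂ e u.1 : ℂ) • e) : ℂ)

/-- Membership in the group `Ĝ` of bounded bijective linear maps preserving `Â`. -/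
def memGhat (e : H) (T : (H × ℂ) →L[ℂ] (H × ℂ)) : Prop :=
  Function.Bijective T ∧ ∀ u v : H × ℂ, hatA e (T u) (T v) = hatA e u v

/-- `T` is the Heisenberg translation `(λ, a', s)`: an element of `Ĝ` sending
`(x,z)` to `λ·((⟨x,e⟩ + ⟨x',a'⟩ + s·z)·e + x' + z·a', z)`, where `|λ| = 1`,
`a' ⊥ e`, `s ≠ 0` and `Re s = ‖a'‖²/2`. -/
def IsHeisenberg (e : H) (T : (H × ℂ) →L[ℂ] (H × ℂ)) (lam : ℂ) (a' : H) (s : ℂ) :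
    Prop :=
  ‖lam‖ = 1 ∧ a' ∈ (ℂ ∙ e)ᗮ ∧ s ≠ 0 ∧ s.re = (1 / 2) * ‖a'‖ ^ 2 ∧
  memGhat e T ∧
  ∀ (x : H) (z : ℂ),
    T (x, z) = lam •
      (((((inner ℂ e x : ℂ) + (inner ℂ a' (x - (inner ℂ e x : ℂ) • e) : ℂ) + s * z) • e
          + (x - (inner ℂ e x : ℂ) • e) + z • a', z)) : H × ℂ)

/-- `K†`, the `Â`-orthogonal complement of a subspace `K` of `H ⊕ ℂ`. -/
def daggerHat (e : H) (K : Submodule ℂ (H × ℂ)) : Submodule ℂ (H × ℂ) where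
  carrier := {v | ∀ m ∈ K, hatA e v m = 0}
  add_mem' := by
    intro a b ha hb m hm
    have h1 := ha m hm
    have h2 := hb m hm
    simp only [hatA, Prod.fst_add, Prod.snd_add, inner_add_right, inner_sub_right,
      inner_smul_right, add_smul] at *
    ring_nf at *
    linear_combination h1 + h2
  zero_mem' := by
    intro m hm
    simp [hatA]
  smul_mem' := by
    intro c a ha m hm
    have h1 := ha m hm
    simp only [hatA, Prod.smul_fst, Prod.smul_snd, inner_smul_right, inner_sub_right,
      smul_eq_mul, smul_smul] at *
    ring_nf at *
    linear_combination c * h1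

end

section
variable {H : Type*} [NormedAddCommGroup H] [InnerProductSpace ℂ H] [CompleteSpace H]

/-- The component `x' = x - ⟨x,e⟩e` of `x`, as an element of `(ℂ·e)ᗮ`. -/
noncomputable def projPerp (e : H) (he : ‖e‖ = 1) (x : H) : ((ℂ ∙ e)ᗮ : Submodule ℂ H) :=
  ⟨x - (inner ℂ e x : ℂ) • e, by
    rw [Submodule.mem_orthogonal]
    intro u hu
    rcases Submodule.mem_span_singleton.1 hu with ⟨c, rfl⟩
    have h1 : (inner ℂ e e : ℂ) = 1 := by
      rw [inner_self_eq_norm_sq_to_K, he]; norm_num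
    simp [inner_smul_left, inner_sub_right, inner_smul_right, h1]
    rw [he]; simp; ring⟩

end

/-!
Pairing with the fixed vector `(e, 0)` shows that `T̂` multiplies the last coordinate by
`μ = 1 / conj λ`. Hence `T̂` preserves `H × {0}`, on which `Â` is `⟨x', y'⟩`, so the compression `U`
of `T̂` to `(ℂ e)ᗮ` is unitary. Everything else is read off from `T̂ (0, 1) = μ • (s e + a', 1)`:
this vector is `Â`-null, which says `Re s = ‖a'‖² / 2`, and its pairing with `T̂ (x, 0)` gives the
`e`-coordinate of `T̂ (x, 0)`.
-/

open ComplexConjugate Submodule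
open scoped ComplexInnerProductSpace

theorem ne_zero_of_injective_of_apply_eq_smul {R M F : Type*} [Semiring R] [AddCommMonoid M]
    [Module R M] [FunLike F M M] [ZeroHomClass F M M] {f : F} (hf : Function.Injective f)
    {v : M} (hv : v ≠ 0) {c : R} (h : f v = c • v) : c ≠ 0 := by
  rintro rfl
  exact hv (hf (by rw [h, zero_smul, map_zero]))

section

variable {H : Type*} [NormedAddCommGroup H] [InnerProductSpace ℂ H] {e : H}

theorem coe_projPerp (he : ‖e‖ = 1) (x : H) : (projPerp e he x : H) = x - ⟪e, x⟫ • e := rfl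

theorem projPerp_eq_orthogonalProjectionOnto (he : ‖e‖ = 1) (x : H) :
    projPerp e he x = (ℂ ∙ e)ᗮ.orthogonalProjectionOnto x := by
  ext
  simp [coe_projPerp, starProjection_unit_singleton ℂ he]

theorem projPerp_coe (he : ‖e‖ = 1) (v : (ℂ ∙ e)ᗮ) : projPerp e he v = v := by
  ext
  simp [coe_projPerp, mem_orthogonal_singleton_iff_inner_right.1 v.2]

theorem projPerp_add_smul_self (he : ‖e‖ = 1) (x : H) (c : ℂ) :
    projPerp e he (x + c • e) = projPerp e he x := by
  ext
  simp only [coe_projPerp, inner_add_right, inner_smul_right, inner_self_eq_one_of_norm_eq_one he]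
  module

theorem inner_smul_add_projPerp (he : ‖e‖ = 1) (x : H) : ⟪e, x⟫ • e + projPerp e he x = x := by
  simp [coe_projPerp]

theorem hatA_smul_left (c : ℂ) (u v : H × ℂ) : hatA e (c • u) v = c * hatA e u v := by
  simp only [hatA, Prod.smul_fst, Prod.smul_snd, inner_smul_right, mul_smul, ← smul_sub,
    smul_eq_mul]
  ring

theorem hatA_smul_right (c : ℂ) (u v : H × ℂ) : hatA e u (c • v) = conj c * hatA e u v := by
  simp only [hatA, Prod.smul_fst, Prod.smul_snd, inner_smul_left, inner_smul_right, mul_smul,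
    ← smul_sub, map_mul, smul_eq_mul]
  ring

theorem hatA_e_zero_right (he : ‖e‖ = 1) (u : H × ℂ) : hatA e u (e, 0) = -u.2 := by
  simp [hatA, he]

theorem hatA_inl_left (he : ‖e‖ = 1) (x : H) (v : H × ℂ) :
    hatA e (x, 0) v = -⟪e, x⟫ * conj v.2 + ⟪projPerp e he v.1, projPerp e he x⟫ := by
  simp only [hatA, coe_inner, coe_projPerp]
  ring

theorem hatA_self_smul_add_one (he : ‖e‖ = 1) (s : ℂ) (a : (ℂ ∙ e)ᗮ) :
    hatA e (s • e + a, 1) (s • e + a, 1) = ((‖(a : H)‖ ^ 2 - 2 * s.re : ℝ) : ℂ) := by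
  have hea : ⟪e, (a : H)⟫ = 0 := mem_orthogonal_singleton_iff_inner_right.1 a.2
  have hcoord : ⟪e, s • e + (a : H)⟫ = s := by simp [hea, he]
  simp only [hatA, hcoord, add_sub_cancel_left, inner_self_eq_norm_sq_to_K, map_one,
    RCLike.ofReal_eq_complex_ofReal]
  rw [← inner_conj_symm, hcoord]
  linear_combination (norm := (push_cast; ring)) -Complex.add_conj s

variable {T : (H × ℂ) →L[ℂ] (H × ℂ)} {lam : ℂ}

theorem conj_mul_snd_apply (he : ‖e‖ = 1) (hT : memGhat e T) (hfix : T (e, 0) = lam • (e, 0))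
    (u : H × ℂ) : conj lam * (T u).2 = u.2 := by
  have h := hT.2 u (e, 0)
  rw [hfix, hatA_smul_right, hatA_e_zero_right he, hatA_e_zero_right he] at h
  linear_combination -h

theorem eigenvalue_ne_zero (he : ‖e‖ = 1) (hT : memGhat e T) (hfix : T (e, 0) = lam • (e, 0)) :
    lam ≠ 0 :=
  ne_zero_of_injective_of_apply_eq_smul hT.1.1 (by simp [← norm_ne_zero_iff, he]) hfix

theorem snd_apply (he : ‖e‖ = 1) (hT : memGhat e T) (hfix : T (e, 0) = lam • (e, 0))
    (u : H × ℂ) : (T u).2 = 1 / conj lam * u.2 := by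
  have hlam : conj lam ≠ 0 := (map_ne_zero _).2 (eigenvalue_ne_zero he hT hfix)
  rw [← conj_mul_snd_apply he hT hfix u]
  field_simp

theorem apply_inl_eq (he : ‖e‖ = 1) (hT : memGhat e T) (hfix : T (e, 0) = lam • (e, 0))
    (x : H) : T (x, 0) = ((T (x, 0)).1, 0) :=
  Prod.ext rfl (by simp [snd_apply he hT hfix])

noncomputable def perpBlock (e : H) (T : (H × ℂ) →L[ℂ] (H × ℂ)) : (ℂ ∙ e)ᗮ →L[ℂ] (ℂ ∙ e)ᗮ :=
  (ℂ ∙ e)ᗮ.orthogonalProjectionOnto ∘L ContinuousLinearMap.fst ℂ H ℂ ∘L T ∘L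
    ContinuousLinearMap.inl ℂ H ℂ ∘L (ℂ ∙ e)ᗮ.subtypeL

theorem perpBlock_apply (he : ‖e‖ = 1) (v : (ℂ ∙ e)ᗮ) :
    perpBlock e T v = projPerp e he (T ((v : H), 0)).1 := by
  simp [perpBlock, projPerp_eq_orthogonalProjectionOnto]

theorem perpBlock_projPerp (he : ‖e‖ = 1) (hfix : T (e, 0) = lam • (e, 0)) (x : H) :
    perpBlock e T (projPerp e he x) = projPerp e he (T (x, 0)).1 := by
  have hx : ((projPerp e he x : H), (0 : ℂ)) = (x, 0) + (-⟪e, x⟫) • (e, 0) := by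
    ext <;> simp [coe_projPerp, sub_eq_add_neg]
  rw [perpBlock_apply he, hx, map_add, map_smul, hfix, Prod.fst_add, Prod.smul_fst,
    Prod.smul_fst, smul_smul, projPerp_add_smul_self]

theorem inner_perpBlock (he : ‖e‖ = 1) (hT : memGhat e T) (hfix : T (e, 0) = lam • (e, 0))
    (u v : (ℂ ∙ e)ᗮ) : ⟪perpBlock e T u, perpBlock e T v⟫ = ⟪u, v⟫ := by
  have h := hT.2 ((v : H), 0) ((u : H), 0)
  rw [apply_inl_eq he hT hfix (u : H), apply_inl_eq he hT hfix (v : H), hatA_inl_left he,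
    hatA_inl_left he] at h
  simpa [perpBlock_apply he, projPerp_coe] using h

theorem perpBlock_bijective (he : ‖e‖ = 1) (hT : memGhat e T)
    (hfix : T (e, 0) = lam • (e, 0)) : Function.Bijective (perpBlock e T) := by
  refine ⟨(LinearMap.isometryOfInner (perpBlock e T).toLinearMap
    (inner_perpBlock he hT hfix)).injective, fun w => ?_⟩
  obtain ⟨u, hu⟩ := hT.1.2 ((w : H), 0)
  have hu2 : u.2 = 0 := by rw [← conj_mul_snd_apply he hT hfix, hu, mul_zero]
  refine ⟨projPerp e he u.1, ?_⟩
  rw [perpBlock_projPerp he hfix, ← hu2, hu, projPerp_coe]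

noncomputable def heisenbergVector (e : H) (he : ‖e‖ = 1) (T : (H × ℂ) →L[ℂ] (H × ℂ)) (lam : ℂ) :
    (ℂ ∙ e)ᗮ :=
  conj lam • projPerp e he (T (0, 1)).1

noncomputable def heisenbergHeight (e : H) (T : (H × ℂ) →L[ℂ] (H × ℂ)) (lam : ℂ) : ℂ :=
  conj lam * ⟪e, (T (0, 1)).1⟫

theorem apply_zero_one (he : ‖e‖ = 1) (hT : memGhat e T) (hfix : T (e, 0) = lam • (e, 0)) :
    T (0, 1) = (1 / conj lam) •
      (heisenbergHeight e T lam • e + (heisenbergVector e he T lam : H), (1 : ℂ)) := by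
  have hlam : conj lam ≠ 0 := (map_ne_zero _).2 (eigenvalue_ne_zero he hT hfix)
  ext
  · conv_lhs => rw [← inner_smul_add_projPerp he (T (0, 1)).1]
    simp only [heisenbergHeight, heisenbergVector, Prod.smul_fst, smul_add, smul_smul, coe_smul]
    match_scalars <;> field_simp
  · simp [snd_apply he hT hfix]

theorem re_heisenbergHeight (he : ‖e‖ = 1) (hT : memGhat e T)
    (hfix : T (e, 0) = lam • (e, 0)) :
    (heisenbergHeight e T lam).re = 1 / 2 * ‖(heisenbergVector e he T lam : H)‖ ^ 2 := by
  have h := hT.2 (0, 1) (0, 1)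
  rw [apply_zero_one he hT hfix, hatA_smul_left, hatA_smul_right, hatA_self_smul_add_one he] at h
  have h0 : ((‖(heisenbergVector e he T lam : H)‖ ^ 2 - 2 * (heisenbergHeight e T lam).re : ℝ) : ℂ)
      = 0 := by
    simpa [hatA, eigenvalue_ne_zero he hT hfix] using h
  linarith [Complex.ofReal_eq_zero.1 h0]

theorem fst_apply_inl (he : ‖e‖ = 1) (hT : memGhat e T) (hfix : T (e, 0) = lam • (e, 0))
    (x : H) :
    (T (x, 0)).1 =
      (lam * ⟪e, x⟫ + ⟪heisenbergVector e he T lam, perpBlock e T (projPerp e he x)⟫) • e +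
        perpBlock e T (projPerp e he x) := by
  have hlam : lam ≠ 0 := eigenvalue_ne_zero he hT hfix
  have hx : hatA e (x, 0) (0, 1) = -⟪e, x⟫ := by simp [hatA]
  have h := hT.2 (x, 0) (0, 1)
  rw [apply_inl_eq he hT hfix, hatA_inl_left he, snd_apply he hT hfix, hx, mul_one, map_div₀,
    map_one, Complex.conj_conj] at h
  rw [perpBlock_projPerp he hfix, heisenbergVector, inner_smul_left, Complex.conj_conj]
  conv_lhs => rw [← inner_smul_add_projPerp he (T (x, 0)).1]
  congr 2
  field_simp at h
  linear_combination -h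

end

section

variable {H : Type*} [NormedAddCommGroup H] [InnerProductSpace ℂ H] [CompleteSpace H]

/-- the general form of an element of the stabilizer of `∞` in `Ĝ`:
if `T̂(e,0) = λ·(e,0)` then, with `μ = 1/conj λ`, `T̂` is given by a unitary `U` of
`(ℂ·e)ᗮ`, a vector `a' ⊥ e` and `s ∈ ℂ` with `Re s = ‖a'‖²/2`. -/
theorem stabilizer_infinity_form
    (e : H) (he : ‖e‖ = 1)
    (T : (H × ℂ) →L[ℂ] (H × ℂ)) (hT : memGhat e T)
    (lam : ℂ) (hfix : T ((e, 0) : H × ℂ) = lam • ((e, 0) : H × ℂ)) :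
    lam ≠ 0 ∧
    ∃ (U : ((ℂ ∙ e)ᗮ : Submodule ℂ H) →L[ℂ] ((ℂ ∙ e)ᗮ : Submodule ℂ H))
      (a' : ((ℂ ∙ e)ᗮ : Submodule ℂ H)) (c' : ((ℂ ∙ e)ᗮ : Submodule ℂ H)) (s : ℂ),
      -- U is a unitary operator of (ℂ·e)ᗮ
      Function.Bijective U ∧
      (∀ u v : ((ℂ ∙ e)ᗮ : Submodule ℂ H), (inner ℂ (U u) (U v) : ℂ) = inner ℂ u v) ∧
      -- Re s = ‖a'‖²/2
      s.re = (1 / 2) * ‖(a' : H)‖ ^ 2 ∧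
      -- c' = U⁻¹(a')
      U c' = a' ∧
      -- form of T̂, with μ = 1/conj λ
      (∀ (x : H) (z : ℂ),
        T (x, z) =
          (((lam * (inner ℂ e x : ℂ)
              + (inner ℂ (c' : H) (x - (inner ℂ e x : ℂ) • e) : ℂ)
              + (1 / (starRingEnd ℂ) lam) * s * z) • e
            + ((U (projPerp e he x) : H))
            + ((1 / (starRingEnd ℂ) lam) * z) • (a' : H),
            (1 / (starRingEnd ℂ) lam) * z) : H × ℂ)) := by
  obtain ⟨c', hc'⟩ := (perpBlock_bijective he hT hfix).2 (heisenbergVector e he T lam)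
  refine ⟨eigenvalue_ne_zero he hT hfix, perpBlock e T, heisenbergVector e he T lam, c',
    heisenbergHeight e T lam, perpBlock_bijective he hT hfix, inner_perpBlock he hT hfix,
    re_heisenbergHeight he hT hfix, hc', fun x z => ?_⟩
  have hc'x : ⟪(c' : H), x - ⟪e, x⟫ • e⟫ =
      ⟪heisenbergVector e he T lam, perpBlock e T (projPerp e he x)⟫ := by
    rw [← hc', inner_perpBlock he hT hfix, coe_inner, coe_projPerp]
  have hxz : ((x, z) : H × ℂ) = (x, 0) + z • (0, 1) := by ext <;> simp
  rw [hxz, map_add, map_smul, apply_inl_eq he hT hfix, fst_apply_inl he hT hfix,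
    apply_zero_one he hT hfix, hc'x]
  ext
  · simp only [Prod.fst_add, Prod.smul_fst]
    module
  · simp only [Prod.snd_add, Prod.smul_snd, smul_eq_mul]
    ring

end
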